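/- If Ω is a compact continuous signature and 𝐀 = (A, E) is an affinely bounded topological Ω-algebra, then 𝐀 is profinite if and only if A is a totally disconnected compact Hausdorff space. -/

import Mathlib

/-!
If the finite continuous quotients separate points, their fibres are clopen sets separating
points, so `A` is totally separated. Conversely, let `A` be compact, Hausdorff and totally
disconnected, and let `S` be a partition of `A` into clopen sets putting `x` and `y` apart. The
syntactic congruence `a ~ b ↔ ∀ f ∈ M(𝐀), f a ≡ f b (mod S)` is the largest congruence below
`S`. Affine boundedness by `m` writes every element of `M(𝐀)` as a composition of at most `m`
translations of arity at most `m`, so `M(𝐀)` is the image of a compact parameter space `T` under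
a jointly continuous evaluation. The complement of a `~`-class is then a projection along the
compact factor `T` of a closed subset of `T × A`, hence closed: the classes are open, so there
are finitely many, and `A / ~` is a finite discrete algebra separating `x` from `y`.
-/

/-- A translation of the `Ω`-algebra `(A, E)`. -/
def IsTranslation {Ω : ℕ → Type} {A : Type} (E : ∀ n, Ω n → (Fin n → A) → A)
    (g : A → A) : Prop :=
  ∃ (n : ℕ) (ω : Ω n) (i : Fin n) (a : Fin n → A),
    g = fun x => E n ω (Function.update a i x)

/-- Membership in the translation monoid `M(𝐀)`. -/
inductive InTransMonoid {Ω : ℕ → Type} {A : Type} (E : ∀ n, Ω n → (Fin n → A) → A) :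
    (A → A) → Prop
  | id : InTransMonoid E (fun x => x)
  | comp {g f : A → A} : IsTranslation E g → InTransMonoid E f → InTransMonoid E (g ∘ f)

/-- A continuous homomorphism from the topological `Ω`-algebra `(A, E)` onto a finite
discrete topological `Ω`-algebra. -/
structure FinQuot (Ω : ℕ → Type) [∀ n, TopologicalSpace (Ω n)]
    (A : Type) [TopologicalSpace A] (E : ∀ n, Ω n → (Fin n → A) → A) where
  B : Type
  [tB : TopologicalSpace B]
  [finB : Finite B]
  [discB : DiscreteTopology B]
  op : ∀ n, Ω n → (Fin n → B) → B
  contOp : ∀ n, Continuous fun p : Ω n × (Fin n → B) => op n p.1 p.2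
  toFun : A → B
  cont : Continuous toFun
  hom : ∀ (n : ℕ) (ω : Ω n) (a : Fin n → A), toFun (E n ω a) = op n ω fun i => toFun (a i)

/-- A topological `Ω`-algebra is profinite if it is compact and residually finite. -/
def IsProfinite (Ω : ℕ → Type) [∀ n, TopologicalSpace (Ω n)]
    (A : Type) [TopologicalSpace A] (E : ∀ n, Ω n → (Fin n → A) → A) : Prop :=
  CompactSpace A ∧ ∀ x y : A, x ≠ y → ∃ q : FinQuot Ω A E, q.toFun x ≠ q.toFun y
/-- Ω-polynomials over `A` in a single variable `x`. -/
inductive PolyTerm (Ω : ℕ → Type) (A : Type) : Type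
  | var : PolyTerm Ω A
  | const : A → PolyTerm Ω A
  | app : (n : ℕ) → Ω n → (Fin n → PolyTerm Ω A) → PolyTerm Ω A

namespace PolyTerm

/-- Number of occurrences of the variable `x`; a term is linear in `x` iff this is `1`. -/
def varCount {Ω : ℕ → Type} {A : Type} : PolyTerm Ω A → ℕ
  | .var => 1
  | .const _ => 0
  | .app n _ ts => ∑ i : Fin n, varCount (ts i)

/-- The height of a term (constants and the variable have height `0`). -/
def height {Ω : ℕ → Type} {A : Type} : PolyTerm Ω A → ℕ
  | .var => 0
  | .const _ => 0
  | .app n _ ts => if n = 0 then 0 else (Finset.univ.sup fun i : Fin n => height (ts i)) + 1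

/-- The arity of a term. -/
def arity {Ω : ℕ → Type} {A : Type} : PolyTerm Ω A → ℕ
  | .var => 0
  | .const _ => 0
  | .app n _ ts => max n (Finset.univ.sup fun i : Fin n => arity (ts i))

/-- Evaluation of a polynomial as a unary function on `A` (the map `Ψ_𝐀`). -/
def eval {Ω : ℕ → Type} {A : Type} (E : ∀ n, Ω n → (Fin n → A) → A) :
    PolyTerm Ω A → A → A
  | .var, z => z
  | .const a, _ => a
  | .app n ω ts, z => E n ω fun i => eval E (ts i) z

end PolyTerm

/-- `𝐀 = (A, E)` is affinely bounded by `m`: the translation monoid consists exactly of the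
evaluations of linear `Ω`-polynomials over `A` in one variable of height `≤ m` and arity
`≤ m`. -/
def AffinelyBoundedBy {Ω : ℕ → Type} {A : Type} (E : ∀ n, Ω n → (Fin n → A) → A)
    (m : ℕ) : Prop :=
  {f : A → A | InTransMonoid E f} =
    {f : A → A | ∃ t : PolyTerm Ω A,
      t.varCount = 1 ∧ t.height ≤ m ∧ t.arity ≤ m ∧ f = PolyTerm.eval E t}

/-- `𝐀` is affinely bounded if it is affinely bounded by some `m ∈ ℕ`. -/
def AffinelyBounded {Ω : ℕ → Type} {A : Type} (E : ∀ n, Ω n → (Fin n → A) → A) : Prop :=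
  ∃ m : ℕ, AffinelyBoundedBy E m

theorem Finset.exists_eq_one_and_eq_zero_of_sum_eq_one {ι : Type*} [Fintype ι] {f : ι → ℕ}
    (h : ∑ i, f i = 1) : ∃ i, f i = 1 ∧ ∀ j, j ≠ i → f j = 0 := by
  classical
  obtain ⟨i, -, hi⟩ := Finset.exists_ne_zero_of_sum_ne_zero (h.trans_ne one_ne_zero)
  have hsplit := Finset.add_sum_erase Finset.univ f (Finset.mem_univ i)
  have hrest : ∑ j ∈ Finset.univ.erase i, f j = 0 := by omega
  refine ⟨i, by omega, fun j hj => ?_⟩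
  exact Finset.sum_eq_zero_iff.mp hrest j (Finset.mem_erase.mpr ⟨hj, Finset.mem_univ j⟩)

theorem Setoid.rel_of_rel_update {α β ι : Type*} [Finite ι] [DecidableEq ι] (s : Setoid α)
    (t : Setoid β) {f : (ι → α) → β}
    (hf : ∀ v i x y, s x y → t (f (Function.update v i x)) (f (Function.update v i y)))
    {a b : ι → α} (hab : ∀ i, s (a i) (b i)) : t (f a) (f b) := by
  have := Fintype.ofFinite ι
  suffices key : ∀ u : Finset ι, t (f a) (f (u.piecewise b a)) by
    simpa using key Finset.univ
  intro u
  induction u using Finset.induction_on with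
  | empty => simp
  | insert j u hj ih =>
    refine t.trans ih ?_
    have hstep := hf (u.piecewise b a) j (a j) (b j) (hab j)
    rwa [← Finset.piecewise_eq_of_notMem u b a hj, Function.update_eq_self,
      ← Finset.piecewise_insert] at hstep

theorem isOpen_setOf_forall_eq_of_compactSpace {T X Y : Type*} [TopologicalSpace T]
    [CompactSpace T] [TopologicalSpace X] [TopologicalSpace Y] [DiscreteTopology Y]
    {φ : T × X → Y} (hφ : Continuous φ) (x : X) : IsOpen {y | ∀ t, φ (t, x) = φ (t, y)} := by
  have hcompl : {y | ∀ t, φ (t, x) = φ (t, y)}ᶜ = Prod.snd '' {p | φ (p.1, x) ≠ φ p} := by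
    ext y
    simp
  rw [← isClosed_compl_iff, hcompl]
  have hclosed : IsClosed {p : T × X | φ (p.1, x) ≠ φ p} :=
    (isClosed_discrete {q : Y × Y | q.1 ≠ q.2}).preimage
      (f := fun p : T × X => (φ (p.1, x), φ p)) (by fun_prop)
  exact isClosedMap_snd_of_compactSpace _ hclosed

variable {Ω : ℕ → Type} {A : Type} {E : ∀ n, Ω n → (Fin n → A) → A}

theorem InTransMonoid.comp_translation {f g : A → A} (hf : InTransMonoid E f)
    (hg : IsTranslation E g) : InTransMonoid E (f ∘ g) := by
  induction hf with
  | id => exact .comp (f := fun x => x) hg .id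
  | comp hh _ ih => exact .comp (f := _ ∘ g) hh ih

theorem PolyTerm.eval_eq_of_varCount_eq_zero {t : PolyTerm Ω A} (ht : t.varCount = 0)
    (x y : A) : t.eval E x = t.eval E y := by
  induction t with
  | var => simp [varCount] at ht
  | const a => rfl
  | app n ω ts ih =>
    simp only [varCount, Finset.sum_eq_zero_iff, Finset.mem_univ, true_implies] at ht
    simp only [eval]
    congr 1
    exact funext fun i => ih i (ht i)

variable (E) in
/-- The largest congruence of `(A, E)` contained in `s`. -/
def syntacticSetoid (s : Setoid A) : Setoid A where
  r a b := ∀ f, InTransMonoid E f → s (f a) (f b)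
  iseqv := ⟨fun a f _ => s.refl (f a), fun h f hf => s.symm (h f hf),
    fun h₁ h₂ f hf => s.trans (h₁ f hf) (h₂ f hf)⟩

theorem syntacticSetoid_le (s : Setoid A) : syntacticSetoid E s ≤ s :=
  fun _ _ h => h _ .id

theorem syntacticSetoid_rel_translation {s : Setoid A} {g : A → A} (hg : IsTranslation E g)
    {a b : A} (hab : syntacticSetoid E s a b) : syntacticSetoid E s (g a) (g b) :=
  fun f hf => hab (f ∘ g) (hf.comp_translation hg)

theorem syntacticSetoid_rel_map (s : Setoid A) (n : ℕ) (ω : Ω n) {a b : Fin n → A}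
    (hab : ∀ i, syntacticSetoid E s (a i) (b i)) :
    syntacticSetoid E s (E n ω a) (E n ω b) :=
  Setoid.rel_of_rel_update _ _
    (fun v i _ _ hxy => syntacticSetoid_rel_translation ⟨n, ω, i, v, rfl⟩ hxy) hab

section Parametrization

variable (Ω A) in
/-- `⟨⟨n, i⟩, ω, a⟩` parametrizes the translation `z ↦ E n ω (update a i z)` of arity `n ≤ m`. -/
abbrev TranslationData (m : ℕ) : Type :=
  Σ p : (Σ n : Fin (m + 1), Fin n), Ω p.1 × (Fin p.1 → A)

variable (E) in
def TranslationData.toFun {m : ℕ} (d : TranslationData Ω A m) : A → A :=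
  fun z => E d.1.1 d.2.1 (Function.update d.2.2 d.1.2 z)

variable (E) in
def chainEval {m : ℕ} (l : List (TranslationData Ω A m)) : A → A :=
  l.foldr (fun d f => d.toFun E ∘ f) id

@[simp]
theorem chainEval_cons {m : ℕ} (d : TranslationData Ω A m) (l : List (TranslationData Ω A m)) :
    chainEval E (d :: l) = d.toFun E ∘ chainEval E l := rfl

theorem inTransMonoid_chainEval {m : ℕ} (l : List (TranslationData Ω A m)) :
    InTransMonoid E (chainEval E l) := by
  induction l with
  | nil => exact .id
  | cons d l ih => exact .comp (f := chainEval E l) ⟨_, _, _, _, rfl⟩ ih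

theorem PolyTerm.exists_chainEval_eq [Nonempty A] {m : ℕ} {t : PolyTerm Ω A}
    (hvc : t.varCount = 1) (har : t.arity ≤ m) :
    ∃ l : List (TranslationData Ω A m), l.length ≤ t.height ∧ t.eval E = chainEval E l := by
  induction t with
  | var => exact ⟨[], le_rfl, rfl⟩
  | const a => simp [varCount] at hvc
  | app n ω ts ih =>
    simp only [varCount] at hvc
    simp only [arity, max_le_iff, Finset.sup_le_iff, Finset.mem_univ, true_implies] at har
    obtain ⟨i, hi, hothers⟩ := Finset.exists_eq_one_and_eq_zero_of_sum_eq_one hvc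
    obtain ⟨l, hlen, hl⟩ := ih i hi (har.2 i)
    -- all subterms but `ts i` are constant, so they may be evaluated at any point
    let x₀ : A := Classical.arbitrary A
    refine ⟨⟨⟨⟨n, by omega⟩, i⟩, ω, fun j => (ts j).eval E x₀⟩ :: l, ?_, ?_⟩
    · simp only [List.length_cons, height, i.pos.ne', if_false]
      exact Nat.succ_le_succ (hlen.trans (Finset.le_sup (f := fun j => (ts j).height)
        (Finset.mem_univ i)))
    · funext z
      simp only [eval, chainEval_cons, Function.comp_apply, TranslationData.toFun, ← hl]
      congr 1
      funext j
      rcases eq_or_ne j i with rfl | hj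
      · rw [Function.update_self]
      · rw [Function.update_of_ne hj]
        exact PolyTerm.eval_eq_of_varCount_eq_zero (hothers j hj) z x₀

variable [∀ n, TopologicalSpace (Ω n)] [TopologicalSpace A]

theorem continuous_translationData_toFun
    (hE : ∀ n, Continuous fun p : Ω n × (Fin n → A) => E n p.1 p.2) (m : ℕ) :
    Continuous fun p : TranslationData Ω A m × A => p.1.toFun E p.2 := by
  have hfiber : ∀ p : Σ n : Fin (m + 1), Fin n,
      Continuous fun q : (Ω p.1 × (Fin p.1 → A)) × A =>
        E p.1 q.1.1 (Function.update q.1.2 p.2 q.2) := fun p =>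
    (hE p.1).comp (continuous_fst.fst.prodMk (continuous_fst.snd.update p.2 continuous_snd))
  exact (continuous_sigma (f := fun q : Σ p : Σ n : Fin (m + 1), Fin n,
      (Ω p.1 × (Fin p.1 → A)) × A => E q.1.1 q.2.1.1 (Function.update q.2.1.2 q.1.2 q.2.2))
    hfiber).comp Homeomorph.sigmaProdDistrib.continuous

theorem continuous_chainEval_ofFn
    (hE : ∀ n, Continuous fun p : Ω n × (Fin n → A) => E n p.1 p.2) (m k : ℕ) :
    Continuous fun p : (Fin k → TranslationData Ω A m) × A => chainEval E (List.ofFn p.1) p.2 := by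
  induction k with
  | zero => exact continuous_snd
  | succ k ih =>
    simp only [List.ofFn_succ, chainEval_cons, Function.comp_apply]
    have htail : Continuous fun p : (Fin (k + 1) → TranslationData Ω A m) × A =>
        chainEval E (List.ofFn fun i => p.1 i.succ) p.2 :=
      ih.comp (f := fun p : (Fin (k + 1) → TranslationData Ω A m) × A =>
        (fun i : Fin k => p.1 i.succ, p.2)) (by fun_prop)
    exact (continuous_translationData_toFun hE m).comp
      (((continuous_apply 0).comp continuous_fst).prodMk htail)

theorem AffinelyBoundedBy.exists_compact_parametrization [∀ n, CompactSpace (Ω n)]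
    [CompactSpace A] [Nonempty A]
    (hE : ∀ n, Continuous fun p : Ω n × (Fin n → A) => E n p.1 p.2) {m : ℕ}
    (h : AffinelyBoundedBy E m) :
    ∃ (T : Type) (_ : TopologicalSpace T) (_ : CompactSpace T) (ev : T → A → A),
      Continuous (fun p : T × A => ev p.1 p.2) ∧ ∀ f, InTransMonoid E f ↔ ∃ c, ev c = f := by
  refine ⟨Σ k : Fin (m + 1), Fin k → TranslationData Ω A m, inferInstance, inferInstance,
    fun c => chainEval E (List.ofFn c.2), ?_, fun f => ⟨fun hf => ?_, ?_⟩⟩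
  · exact (continuous_sigma
      (f := fun q : Σ k : Fin (m + 1), (Fin k → TranslationData Ω A m) × A =>
        chainEval E (List.ofFn q.2.1) q.2.2)
      fun k => continuous_chainEval_ofFn hE m k).comp Homeomorph.sigmaProdDistrib.continuous
  · have hmem : f ∈ {f : A → A | InTransMonoid E f} := hf
    rw [h] at hmem
    obtain ⟨t, hvc, hht, har, rfl⟩ := hmem
    obtain ⟨l, hlen, hl⟩ := t.exists_chainEval_eq (E := E) hvc har
    exact ⟨⟨⟨l.length, by omega⟩, l.get⟩, by simp [hl]⟩
  · rintro ⟨c, rfl⟩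
    exact inTransMonoid_chainEval _

end Parametrization

section Quotient

variable [TopologicalSpace A]

theorem isOpen_setOf_syntacticSetoid_rel {T : Type} [TopologicalSpace T] [CompactSpace T]
    {ev : T → A → A} (hev : Continuous fun p : T × A => ev p.1 p.2)
    (hM : ∀ f, InTransMonoid E f ↔ ∃ c, ev c = f) (S : DiscreteQuotient A) (a : A) :
    IsOpen {b | syntacticSetoid E S.toSetoid a b} := by
  have hset : {b | syntacticSetoid E S.toSetoid a b} =
      {b | ∀ c, S.proj (ev c a) = S.proj (ev c b)} := by
    ext b
    refine ⟨fun h c => Quotient.sound (h _ ((hM _).2 ⟨c, rfl⟩)), fun h f hf => ?_⟩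
    obtain ⟨c, rfl⟩ := (hM f).1 hf
    exact Quotient.exact (h c)
  rw [hset]
  exact isOpen_setOf_forall_eq_of_compactSpace (S.proj_continuous.comp hev) a

variable (E) in
noncomputable def FinQuot.ofDiscreteQuotient [∀ n, TopologicalSpace (Ω n)] [CompactSpace A]
    (hE : ∀ n, Continuous fun p : Ω n × (Fin n → A) => E n p.1 p.2) (S : DiscreteQuotient A)
    (hS : ∀ n (ω : Ω n) (a b : Fin n → A), (∀ i, S.toSetoid (a i) (b i)) →
      S.toSetoid (E n ω a) (E n ω b)) :
    FinQuot Ω A E where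
  B := S
  op n ω v := S.proj (E n ω fun i => (v i).out)
  contOp n := S.proj_continuous.comp ((hE n).comp
    (f := fun p : Ω n × (Fin n → S) => (p.1, fun i => (p.2 i).out))
    (continuous_fst.prodMk ((continuous_of_discreteTopology
      (f := fun v : Fin n → S => fun i => (v i).out)).comp continuous_snd)))
  toFun := S.proj
  cont := S.proj_continuous
  hom n ω a := Quotient.sound (hS n ω _ _ fun i => S.symm _ _ (Quotient.mk_out (a i)))

theorem IsProfinite.totallySeparatedSpace [∀ n, TopologicalSpace (Ω n)]
    (h : IsProfinite Ω A E) : TotallySeparatedSpace A := by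
  refine totallySeparatedSpace_iff_exists_isClopen.mpr fun x y hxy => ?_
  obtain ⟨q, hq⟩ := h.2 x y hxy
  let := q.tB
  have := q.discB
  exact ⟨q.toFun ⁻¹' {q.toFun x}, (isClopen_discrete _).preimage q.cont, rfl, Ne.symm hq⟩

theorem isProfinite_of_affinelyBounded [∀ n, TopologicalSpace (Ω n)] [∀ n, CompactSpace (Ω n)]
    [CompactSpace A] [T2Space A] [TotallyDisconnectedSpace A]
    (hE : ∀ n, Continuous fun p : Ω n × (Fin n → A) => E n p.1 p.2) (hbd : AffinelyBounded E) :
    IsProfinite Ω A E := by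
  refine ⟨inferInstance, fun x y hxy => ?_⟩
  obtain ⟨S, hS⟩ : ∃ S : DiscreteQuotient A, S.proj x ≠ S.proj y := by
    by_contra! h
    exact hxy (DiscreteQuotient.eq_of_forall_proj_eq h)
  have : Nonempty A := ⟨x⟩
  obtain ⟨m, hm⟩ := hbd
  obtain ⟨T, _, _, ev, hev, hM⟩ := hm.exists_compact_parametrization hE
  let S' : DiscreteQuotient A :=
    ⟨syntacticSetoid E S.toSetoid, isOpen_setOf_syntacticSetoid_rel hev hM S⟩
  refine ⟨FinQuot.ofDiscreteQuotient E hE S' (fun n ω _ _ => syntacticSetoid_rel_map _ n ω),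
    fun h => hS ?_⟩
  exact Quotient.sound (syntacticSetoid_le S.toSetoid (Quotient.exact h))

end Quotient

/-- If `Ω` is a compact continuous signature and `𝐀 = (A, E)` is an affinely bounded
topological `Ω`-algebra, then `𝐀` is profinite iff `A` is a totally disconnected compact
Hausdorff space. -/
theorem statement8 (Ω : ℕ → Type) [∀ n, TopologicalSpace (Ω n)]
    [∀ n, CompactSpace (Ω n)]
    (A : Type) [TopologicalSpace A] (E : ∀ n, Ω n → (Fin n → A) → A)
    (hE : ∀ n, Continuous fun p : Ω n × (Fin n → A) => E n p.1 p.2)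
    (hbd : AffinelyBounded E) :
    IsProfinite Ω A E ↔
      (CompactSpace A ∧ T2Space A ∧ TotallyDisconnectedSpace A) := by
  constructor
  · intro h
    have := h.totallySeparatedSpace
    exact ⟨h.1, inferInstance, inferInstance⟩
  · rintro ⟨_, _, _⟩
    exact isProfinite_of_affinelyBounded hE hbd
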